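/- If G is a connected finite graph with at least one edge and a fixed vertex ordering, then the associated graph Ĝ is connected. -/

import Mathlib

open Polynomial

/-- A clique cover of `G`: a partition of the vertex set into parts each inducing a clique. -/
def SimpleGraph.IsCliqueCover {V : Type*} [Fintype V] [DecidableEq V] (G : SimpleGraph V)
    (P : Finpartition (Finset.univ : Finset V)) : Prop :=
  ∀ p ∈ P.parts, G.IsClique (p : Set V)

/-- `a_k(G)`: the number of clique covers of `G` with exactly `k` parts. -/
noncomputable def numCliqueCovers {V : Type*} [Fintype V] [DecidableEq V] (G : SimpleGraph V)
    (k : ℕ) : ℕ :=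
  {P : Finpartition (Finset.univ : Finset V) | G.IsCliqueCover P ∧ P.parts.card = k}.ncard

/-- A finset of vertices is independent: pairwise non-adjacent. -/
def SimpleGraph.IsIndepFinset {W : Type*} (H : SimpleGraph W) (s : Finset W) : Prop :=
  ∀ v ∈ s, ∀ w ∈ s, ¬ H.Adj v w

/-- `i_k(H)`: the number of independent sets of size `k` in `H`. -/
noncomputable def numIndepSets {W : Type*} (H : SimpleGraph W) (k : ℕ) : ℕ :=
  {s : Finset W | H.IsIndepFinset s ∧ s.card = k}.ncard

/-- The auxiliary one-sided relation in the construction of `Ĝ`: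
for edges `e = (u_i,u_j)`, `f = (u_k,u_l)` with `j ≤ l`, they are related iff
`i = k`, or `j = k`, or (`j = l` and `u_i, u_k` non-adjacent). -/
def hatRel {n : ℕ} (G : SimpleGraph (Fin n)) (e f : Fin n × Fin n) : Prop :=
  e.2 ≤ f.2 ∧ (e.1 = f.1 ∨ e.2 = f.1 ∨ (e.2 = f.2 ∧ ¬ G.Adj e.1 f.1))

/-- The graph `Ĝ` associated to `G` with its vertex ordering: vertices are the
edges `(u_i,u_j)` with `i < j`. -/
def hatGraph {n : ℕ} (G : SimpleGraph (Fin n)) :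
    SimpleGraph {p : Fin n × Fin n // p.1 < p.2 ∧ G.Adj p.1 p.2} where
  Adj e f := e ≠ f ∧ (hatRel G e.1 f.1 ∨ hatRel G f.1 e.1)
  symm := ⟨fun e f h => ⟨h.1.symm, h.2.symm⟩⟩
  loopless := ⟨fun e h => h.1 rfl⟩

/-- The independence polynomial `I(H,x) = Σ_k (-1)^k i_k(H) x^k` (over `ℝ`). -/
noncomputable def indepPoly {W : Type*} [Fintype W] (H : SimpleGraph W) : Polynomial ℝ :=
  ∑ k ∈ Finset.range (Fintype.card W + 1), C ((-1 : ℝ) ^ k * (numIndepSets H k : ℝ)) * X ^ k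

/-- The adjoint polynomial `h(G,x) = Σ_k (-1)^{n-k} a_k(G) x^k` (over `ℝ`). -/
noncomputable def adjPoly {V : Type*} [Fintype V] [DecidableEq V] (G : SimpleGraph V) :
    Polynomial ℝ :=
  ∑ k ∈ Finset.range (Fintype.card V + 1),
    C ((-1 : ℝ) ^ (Fintype.card V - k) * (numCliqueCovers G k : ℝ)) * X ^ k

/-- `h*(G,x) = x^n h(G,1/x) = Σ_k (-1)^k a_{n-k}(G) x^k` (over `ℝ`). -/
noncomputable def hStarPoly {V : Type*} [Fintype V] [DecidableEq V] (G : SimpleGraph V) :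
    Polynomial ℝ :=
  ∑ k ∈ Finset.range (Fintype.card V + 1),
    C ((-1 : ℝ) ^ k * (numCliqueCovers G (Fintype.card V - k) : ℝ)) * X ^ k

/-- Integer version of the independence polynomial. -/
noncomputable def indepPolyZ {W : Type*} [Fintype W] (H : SimpleGraph W) : Polynomial ℤ :=
  ∑ k ∈ Finset.range (Fintype.card W + 1), C ((-1 : ℤ) ^ k * (numIndepSets H k : ℤ)) * X ^ k

/-- Integer version of `h*`. -/
noncomputable def hStarPolyZ {V : Type*} [Fintype V] [DecidableEq V] (G : SimpleGraph V) :
    Polynomial ℤ :=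
  ∑ k ∈ Finset.range (Fintype.card V + 1),
    C ((-1 : ℤ) ^ k * (numCliqueCovers G (Fintype.card V - k) : ℤ)) * X ^ k

/-- A finset of edges forming a matching in `G`. -/
def SimpleGraph.IsMatchingFinset {V : Type*} (G : SimpleGraph V) (s : Finset (Sym2 V)) : Prop :=
  (↑s : Set (Sym2 V)) ⊆ G.edgeSet ∧
    ∀ e ∈ s, ∀ f ∈ s, e ≠ f → ∀ v, ¬(v ∈ e ∧ v ∈ f)

/-- `m_k(G)`: number of matchings of size `k`. -/
noncomputable def numMatchings {V : Type*} (G : SimpleGraph V) (k : ℕ) : ℕ :=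
  {s : Finset (Sym2 V) | G.IsMatchingFinset s ∧ s.card = k}.ncard

/-- The matching polynomial `M(G,x) = Σ_k (-1)^k m_k(G) x^{n-k}` (over `ℝ`). -/
noncomputable def matchPoly {V : Type*} [Fintype V] (G : SimpleGraph V) : Polynomial ℝ :=
  ∑ k ∈ Finset.range (Fintype.card V + 1),
    C ((-1 : ℝ) ^ k * (numMatchings G k : ℝ)) * X ^ (Fintype.card V - k)

/-- The line graph `L(G)`: vertices are the edges of `G`, adjacent iff distinct and
sharing an endpoint. -/
def lineGraph' {V : Type*} (G : SimpleGraph V) : SimpleGraph G.edgeSet where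
  Adj e f := e ≠ f ∧ ∃ v, v ∈ (e : Sym2 V) ∧ v ∈ (f : Sym2 V)
  symm := ⟨fun e f h => ⟨h.1.symm, h.2.choose, h.2.choose_spec.2, h.2.choose_spec.1⟩⟩
  loopless := ⟨fun e h => h.1 rfl⟩

/-- `H ∪ K₁`: the disjoint union of `H` with one isolated vertex. -/
def addIsolated {V : Type*} (H : SimpleGraph V) : SimpleGraph (V ⊕ Unit) where
  Adj x y := ∃ a b, x = Sum.inl a ∧ y = Sum.inl b ∧ H.Adj a b
  symm := by refine ⟨?_⟩; rintro x y ⟨a, b, rfl, rfl, h⟩; exact ⟨b, a, rfl, rfl, h.symm⟩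
  loopless := by refine ⟨?_⟩; rintro x ⟨a, b, rfl, h, hadj⟩; cases Sum.inl_injective h; exact hadj.ne rfl

/-- `b` is the smallest zero of `p` in `(0,1]`. -/
def IsBetaZero (p : Polynomial ℝ) (b : ℝ) : Prop :=
  b ∈ Set.Ioc (0 : ℝ) 1 ∧ p.eval b = 0 ∧ ∀ y ∈ Set.Ioc (0 : ℝ) 1, p.eval y = 0 → b ≤ y

/-- `g` is the largest real zero of `p`. -/
def IsGammaZero (p : Polynomial ℝ) (g : ℝ) : Prop :=
  p.eval g = 0 ∧ ∀ y : ℝ, p.eval y = 0 → y ≤ g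

/-!
Every edge of `G` at a vertex `v` lies in one component of `Ĝ`: two such edges either share their
smaller endpoint (then the relation `i = k` joins them), or one's larger endpoint is the other's
smaller endpoint (`j = k`), or both end at `v = u_j`; in the last case they are adjacent in `Ĝ` if
`u_i u_k` is not an edge, and otherwise the edge `u_i u_k` is a common neighbour. Stars of adjacent
vertices of `G` share an edge, so a walk in `G` between endpoints of two edges links them in `Ĝ`.
-/

namespace hatGraph

variable {n : ℕ} {G : SimpleGraph (Fin n)}

abbrev OrderedEdge (G : SimpleGraph (Fin n)) := {p : Fin n × Fin n // p.1 < p.2 ∧ G.Adj p.1 p.2}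

namespace OrderedEdge

def IsIncident (e : OrderedEdge G) (v : Fin n) : Prop := e.1.1 = v ∨ e.1.2 = v

lemma eq_iff_fst_eq_snd_eq {e f : OrderedEdge G} : e = f ↔ e.1.1 = f.1.1 ∧ e.1.2 = f.1.2 := by
  rw [Subtype.ext_iff, Prod.ext_iff]

lemma exists_isIncident_of_adj {a b : Fin n} (h : G.Adj a b) :
    ∃ e : OrderedEdge G, e.IsIncident a ∧ e.IsIncident b := by
  rcases lt_or_gt_of_ne h.ne with hab | hba
  · exact ⟨⟨(a, b), hab, h⟩, Or.inl rfl, Or.inr rfl⟩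
  · exact ⟨⟨(b, a), hba, h.symm⟩, Or.inr rfl, Or.inl rfl⟩

end OrderedEdge

open OrderedEdge

lemma adj_of_fst_eq_of_snd_lt {e f : OrderedEdge G} (h₁ : e.1.1 = f.1.1) (h₂ : e.1.2 < f.1.2) :
    (hatGraph G).Adj e f :=
  ⟨fun hef => h₂.ne (eq_iff_fst_eq_snd_eq.1 hef).2, Or.inl ⟨h₂.le, Or.inl h₁⟩⟩

lemma adj_of_snd_eq_fst {e f : OrderedEdge G} (h : e.1.2 = f.1.1) : (hatGraph G).Adj e f :=
  ⟨fun hef => e.2.1.ne' (hef ▸ h), Or.inl ⟨h.le.trans f.2.1.le, Or.inr (Or.inl h)⟩⟩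

lemma adj_of_snd_eq_of_not_adj {e f : OrderedEdge G} (hef : e ≠ f) (h₂ : e.1.2 = f.1.2)
    (hG : ¬ G.Adj e.1.1 f.1.1) : (hatGraph G).Adj e f :=
  ⟨hef, Or.inl ⟨h₂.le, Or.inr (Or.inr ⟨h₂, hG⟩)⟩⟩

lemma reachable_of_fst_eq {e f : OrderedEdge G} (h : e.1.1 = f.1.1) :
    (hatGraph G).Reachable e f := by
  rcases lt_trichotomy e.1.2 f.1.2 with hlt | heq | hgt
  · exact (adj_of_fst_eq_of_snd_lt h hlt).reachable
  · exact (eq_iff_fst_eq_snd_eq.2 ⟨h, heq⟩) ▸ .refl e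
  · exact (adj_of_fst_eq_of_snd_lt h.symm hgt).reachable.symm

lemma reachable_of_snd_eq {e f : OrderedEdge G} (h : e.1.2 = f.1.2) :
    (hatGraph G).Reachable e f := by
  wlog hlt : e.1.1 < f.1.1 generalizing e f
  · rcases (not_lt.1 hlt).lt_or_eq with hgt | heq
    · exact (this h.symm hgt).symm
    · exact (eq_iff_fst_eq_snd_eq.2 ⟨heq.symm, h⟩) ▸ .refl e
  by_cases hG : G.Adj e.1.1 f.1.1
  · let g : OrderedEdge G := ⟨(e.1.1, f.1.1), hlt, hG⟩
    have hge : (hatGraph G).Adj g e := adj_of_fst_eq_of_snd_lt rfl (h ▸ f.2.1)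
    have hgf : (hatGraph G).Adj g f := adj_of_snd_eq_fst rfl
    exact hge.reachable.symm.trans hgf.reachable
  · have hef : e ≠ f := fun hef => hlt.ne (eq_iff_fst_eq_snd_eq.1 hef).1
    exact (adj_of_snd_eq_of_not_adj hef h hG).reachable

lemma reachable_of_isIncident {e f : OrderedEdge G} {v : Fin n} (he : e.IsIncident v)
    (hf : f.IsIncident v) : (hatGraph G).Reachable e f := by
  rcases he with he | he <;> rcases hf with hf | hf
  · exact reachable_of_fst_eq (he.trans hf.symm)
  · exact (adj_of_snd_eq_fst (hf.trans he.symm)).reachable.symm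
  · exact (adj_of_snd_eq_fst (he.trans hf.symm)).reachable
  · exact reachable_of_snd_eq (he.trans hf.symm)

lemma reachable_of_walk {a b : Fin n} (w : G.Walk a b) {e f : OrderedEdge G}
    (he : e.IsIncident a) (hf : f.IsIncident b) : (hatGraph G).Reachable e f := by
  induction w generalizing e with
  | nil => exact reachable_of_isIncident he hf
  | cons hadj _ ih =>
    obtain ⟨g, hga, hgb⟩ := exists_isIncident_of_adj hadj
    exact (reachable_of_isIncident he hga).trans (ih hgb hf)

end hatGraph

/-- if `G` is connected with at least one edge, then `Ĝ` is connected. -/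
theorem stmt7 {n : ℕ} (G : SimpleGraph (Fin n)) (hc : G.Connected)
    (he : ∃ a b, G.Adj a b) : (hatGraph G).Connected := by
  obtain ⟨a, b, hab⟩ := he
  obtain ⟨e₀, -, -⟩ := hatGraph.OrderedEdge.exists_isIncident_of_adj hab
  have : Nonempty (hatGraph.OrderedEdge G) := ⟨e₀⟩
  refine ⟨fun e f => ?_⟩
  obtain ⟨w⟩ := hc.preconnected e.1.1 f.1.1
  exact hatGraph.reachable_of_walk w (Or.inl rfl) (Or.inl rfl)
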